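/- For a stopping-time POMDP with value function V on the belief simplex satisfying the Bellman equation V(π) = min{ C_f·π , C_d·π + Σ_y V(T(π,y)) σ(π,y) }, where T(π,y) is the Bayes belief update and σ(π,y) its normalizing constant, the stopping region R_1 = {π : C_f·π ≤ C_d·π + Σ_y V(T(π,y)) σ(π,y)} is a convex subset of the belief simplex, provided V is concave on the simplex. -/

import Mathlib

open Finset

/-- Normalizing constant of the Bayes belief update: σ(π,y) = 1ᵀ Bᵧ Pᵀ π. -/
noncomputable def bSigma {S Y : Type*} [Fintype S] (B : Y → S → ℝ) (P : S → S → ℝ)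
    (π : S → ℝ) (y : Y) : ℝ :=
  ∑ j, B y j * ∑ i, π i * P i j

/-- Bayes belief update T(π,y) = Bᵧ Pᵀ π / (1ᵀ Bᵧ Pᵀ π). -/
noncomputable def bayesT {S Y : Type*} [Fintype S] (B : Y → S → ℝ) (P : S → S → ℝ)
    (π : S → ℝ) (y : Y) : S → ℝ :=
  fun j => B y j * (∑ i, π i * P i j) / bSigma B P π y

/-! The perspective `(u, t) ↦ t V(u / t)` of a concave function `V` is superadditive on the cone
over the domain of `V`, and `π ↦ V(T(π,y)) σ(π,y)` is this perspective evaluated at the linear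
image `(Bᵧ Pᵀ π, 1ᵀ Bᵧ Pᵀ π)` of `π`. Hence each term of the continuation cost is concave in the
belief, the stopping inequality compares a linear function with a concave one, and its solution
set in the simplex is convex. -/

open scoped Pointwise

section Perspective

variable {𝕜 E : Type*} [Field 𝕜] [AddCommGroup E] [Module 𝕜 E]

/-- Since `0⁻¹ = 0`, `perspective V u 0 = 0`: this is the contribution of an observation with
`σ(π,y) = 0`. -/
noncomputable def perspective (V : E → 𝕜) (u : E) (t : 𝕜) : 𝕜 := t * V (t⁻¹ • u)

lemma perspective_smul_mul (V : E → 𝕜) (u : E) (t c : 𝕜) :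
    perspective V (c • u) (c * t) = c * perspective V u t := by
  rcases eq_or_ne c 0 with rfl | hc
  · simp [perspective]
  · have hdir : (c * t)⁻¹ • c • u = t⁻¹ • u := by
      rw [smul_smul, mul_inv_rev, mul_assoc, inv_mul_cancel₀ hc, mul_one]
    rw [perspective, perspective, hdir, mul_assoc]

lemma perspective_smul_self (V : E → 𝕜) (x : E) (t : 𝕜) :
    perspective V (t • x) t = t * V x := by
  rcases eq_or_ne t 0 with rfl | ht
  · simp [perspective]
  · rw [perspective, inv_smul_smul₀ ht]

lemma ConcaveOn.perspective_add_le [LinearOrder 𝕜] [IsStrictOrderedRing 𝕜] {s : Set E} {V : E → 𝕜} (hV : ConcaveOn 𝕜 s V)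
    {u₁ u₂ : E} {t₁ t₂ : 𝕜} (ht₁ : 0 ≤ t₁) (ht₂ : 0 ≤ t₂)
    (hu₁ : u₁ ∈ t₁ • s) (hu₂ : u₂ ∈ t₂ • s) :
    perspective V u₁ t₁ + perspective V u₂ t₂ ≤ perspective V (u₁ + u₂) (t₁ + t₂) := by
  obtain ⟨x₁, hx₁, rfl⟩ := hu₁
  obtain ⟨x₂, hx₂, rfl⟩ := hu₂
  simp only [perspective_smul_self]
  rcases (add_nonneg ht₁ ht₂).eq_or_lt with ht | ht
  · obtain ⟨rfl, rfl⟩ : t₁ = 0 ∧ t₂ = 0 := by constructor <;> linarith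
    simp [perspective]
  · have hw : t₁ / (t₁ + t₂) + t₂ / (t₁ + t₂) = 1 := by rw [← add_div, div_self ht.ne']
    have hJensen := hV.2 hx₁ hx₂ (div_nonneg ht₁ ht.le) (div_nonneg ht₂ ht.le) hw
    have hmean : (t₁ / (t₁ + t₂)) • x₁ + (t₂ / (t₁ + t₂)) • x₂
        = (t₁ + t₂)⁻¹ • (t₁ • x₁ + t₂ • x₂) := by
      simp only [smul_add, smul_smul, div_eq_inv_mul]
    rw [hmean, smul_eq_mul, smul_eq_mul] at hJensen
    rw [perspective]
    calc t₁ * V x₁ + t₂ * V x₂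
        = (t₁ + t₂) * (t₁ / (t₁ + t₂) * V x₁ + t₂ / (t₁ + t₂) * V x₂) := by
          field_simp
      _ ≤ _ := mul_le_mul_of_nonneg_left hJensen ht.le

end Perspective

lemma concaveOn_sum {ι 𝕜 E β : Type*} [Semiring 𝕜] [PartialOrder 𝕜] [AddCommMonoid E]
    [AddCommMonoid β] [PartialOrder β] [IsOrderedAddMonoid β] [SMul 𝕜 E] [Module 𝕜 β]
    {s : Set E} (hs : Convex 𝕜 s) (t : Finset ι) {f : ι → E → β}
    (hf : ∀ i ∈ t, ConcaveOn 𝕜 s (f i)) : ConcaveOn 𝕜 s (fun x => ∑ i ∈ t, f i x) := by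
  classical
  induction t using Finset.induction_on with
  | empty =>
    simp only [sum_empty]
    exact concaveOn_const (0 : β) hs
  | insert i t hi ih =>
    simp only [Finset.sum_insert hi]
    exact (hf i (mem_insert_self i t)).add (ih fun j hj => hf j (mem_insert_of_mem hj))

lemma ConcaveOn.convex_setOf_le {𝕜 E β : Type*} [Semiring 𝕜] [PartialOrder 𝕜] [AddCommMonoid E]
    [AddCommGroup β] [PartialOrder β] [IsOrderedAddMonoid β] [SMul 𝕜 E] [Module 𝕜 β]
    [PosSMulMono 𝕜 β]
    {s : Set E} {f g : E → β} (hg : ConcaveOn 𝕜 s g) (hf : ConvexOn 𝕜 s f) :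
    Convex 𝕜 {x ∈ s | f x ≤ g x} := by
  simpa only [Pi.sub_apply, sub_nonneg] using (hg.sub hf).convex_ge 0

section Bayes

variable {S Y : Type*} [Fintype S] (B : Y → S → ℝ) (P : S → S → ℝ)

def bayesUnnorm (y : Y) : (S → ℝ) →ₗ[ℝ] (S → ℝ) where
  toFun π j := B y j * ∑ i, π i * P i j
  map_add' π₁ π₂ := by
    ext j
    simp only [Pi.add_apply, add_mul, sum_add_distrib, mul_add]
  map_smul' c π := by
    ext j
    simp only [Pi.smul_apply, smul_eq_mul, RingHom.id_apply, mul_assoc, ← mul_sum]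
    ring

lemma bSigma_eq_sum_bayesUnnorm (π : S → ℝ) (y : Y) :
    bSigma B P π y = ∑ j, bayesUnnorm B P y π j := rfl

lemma bSigma_add_smul (π₁ π₂ : S → ℝ) (a b : ℝ) (y : Y) :
    bSigma B P (a • π₁ + b • π₂) y = a * bSigma B P π₁ y + b * bSigma B P π₂ y := by
  simp only [bSigma_eq_sum_bayesUnnorm, map_add, map_smul, Pi.add_apply, Pi.smul_apply,
    smul_eq_mul, sum_add_distrib, mul_sum]

lemma apply_bayesT_mul_bSigma (V : (S → ℝ) → ℝ) (π : S → ℝ) (y : Y) :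
    V (bayesT B P π y) * bSigma B P π y
      = perspective V (bayesUnnorm B P y π) (bSigma B P π y) := by
  rw [perspective, mul_comm]
  congr 2
  ext j
  exact div_eq_inv_mul _ _

variable {B P}

lemma bayesUnnorm_nonneg (hB : ∀ y j, 0 ≤ B y j) (hP : ∀ i j, 0 ≤ P i j)
    {π : S → ℝ} (hπ : 0 ≤ π) (y : Y) (j : S) : 0 ≤ bayesUnnorm B P y π j :=
  mul_nonneg (hB y j) (sum_nonneg fun i _ => mul_nonneg (hπ i) (hP i j))

lemma bSigma_nonneg (hB : ∀ y j, 0 ≤ B y j) (hP : ∀ i j, 0 ≤ P i j)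
    {π : S → ℝ} (hπ : 0 ≤ π) (y : Y) : 0 ≤ bSigma B P π y :=
  sum_nonneg fun j _ => bayesUnnorm_nonneg hB hP hπ y j

lemma bayesUnnorm_mem_smul_stdSimplex (hB : ∀ y j, 0 ≤ B y j) (hP : ∀ i j, 0 ≤ P i j)
    {π : S → ℝ} (hπ : π ∈ stdSimplex ℝ S) (y : Y) :
    bayesUnnorm B P y π ∈ bSigma B P π y • stdSimplex ℝ S := by
  have hnum := bayesUnnorm_nonneg hB hP hπ.1 y
  rcases eq_or_ne (bSigma B P π y) 0 with hσ | hσ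
  · rw [hσ, Set.zero_smul_set ⟨π, hπ⟩, Set.mem_zero]
    ext j
    exact (sum_eq_zero_iff_of_nonneg fun j _ => hnum j).1 hσ j (mem_univ j)
  · refine ⟨(bSigma B P π y)⁻¹ • bayesUnnorm B P y π, ⟨fun j => ?_, ?_⟩, smul_inv_smul₀ hσ _⟩
    · exact mul_nonneg (inv_nonneg.2 (bSigma_nonneg hB hP hπ.1 y)) (hnum j)
    · simp only [Pi.smul_apply, smul_eq_mul, ← mul_sum, ← bSigma_eq_sum_bayesUnnorm,
        inv_mul_cancel₀ hσ]

lemma concaveOn_apply_bayesT_mul_bSigma (hB : ∀ y j, 0 ≤ B y j) (hP : ∀ i j, 0 ≤ P i j)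
    {V : (S → ℝ) → ℝ} (hV : ConcaveOn ℝ (stdSimplex ℝ S) V) (y : Y) :
    ConcaveOn ℝ (stdSimplex ℝ S) (fun π => V (bayesT B P π y) * bSigma B P π y) := by
  refine ⟨convex_stdSimplex ℝ S, fun π₁ h₁ π₂ h₂ a b ha hb _ => ?_⟩
  have hmem (c : ℝ) {π : S → ℝ} (hπ : π ∈ stdSimplex ℝ S) :
      c • bayesUnnorm B P y π ∈ (c * bSigma B P π y) • stdSimplex ℝ S := by
    rw [mul_smul]
    exact Set.smul_mem_smul_set (bayesUnnorm_mem_smul_stdSimplex hB hP hπ y)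
  have hsuper := hV.perspective_add_le (mul_nonneg ha (bSigma_nonneg hB hP h₁.1 y))
    (mul_nonneg hb (bSigma_nonneg hB hP h₂.1 y)) (hmem a h₁) (hmem b h₂)
  simp only [perspective_smul_mul] at hsuper
  simp only [apply_bayesT_mul_bSigma, smul_eq_mul]
  rwa [bSigma_add_smul, map_add, map_smul, map_smul]

end Bayes

theorem stmt0_general {S Y : Type*} [Fintype S] [Fintype Y]
    (B : Y → S → ℝ) (hB : ∀ y j, 0 ≤ B y j)
    (P : S → S → ℝ) (hPnn : ∀ i j, 0 ≤ P i j)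
    (Cf Cd : S → ℝ)
    (V : (S → ℝ) → ℝ)
    (hVconc : ConcaveOn ℝ (stdSimplex ℝ S) V) :
    Convex ℝ {π ∈ stdSimplex ℝ S |
      (∑ x, Cf x * π x) ≤ (∑ x, Cd x * π x) + ∑ y, V (bayesT B P π y) * bSigma B P π y} := by
  have hconv := convex_stdSimplex ℝ S
  have hcontinuation : ConcaveOn ℝ (stdSimplex ℝ S)
      fun π => ∑ y, V (bayesT B P π y) * bSigma B P π y :=
    concaveOn_sum hconv univ fun y _ => concaveOn_apply_bayesT_mul_bSigma hB hPnn hVconc y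
  exact (((dotProductBilin ℝ ℝ Cd).concaveOn hconv).add hcontinuation).convex_setOf_le
    ((dotProductBilin ℝ ℝ Cf).convexOn hconv)

/-- The stopping region R₁ of a stopping-time POMDP whose value function satisfies the
Bellman equation is convex, provided the value function is concave on the belief simplex. -/
theorem stmt0 {S Y : Type*} [Fintype S] [Fintype Y]
    (B : Y → S → ℝ) (hB : ∀ y j, 0 ≤ B y j)
    (P : S → S → ℝ) (hPnn : ∀ i j, 0 ≤ P i j) (hProw : ∀ i, ∑ j, P i j = 1)
    (Cf Cd : S → ℝ)
    (V : (S → ℝ) → ℝ)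
    (hVconc : ConcaveOn ℝ (stdSimplex ℝ S) V)
    (hBellman : ∀ π ∈ stdSimplex ℝ S,
      V π = min (∑ x, Cf x * π x)
        ((∑ x, Cd x * π x) + ∑ y, V (bayesT B P π y) * bSigma B P π y)) :
    Convex ℝ {π ∈ stdSimplex ℝ S |
      (∑ x, Cf x * π x) ≤ (∑ x, Cd x * π x) + ∑ y, V (bayesT B P π y) * bSigma B P π y} :=
  stmt0_general B hB P hPnn Cf Cd V hVconc
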